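/- Let Γ ⊆ Λ be an extension of rings such that the inclusion Γ → Λ is a split monomorphism of left Γ-modules, and suppose that Λ is flat as a left Γ-module and as a right Γ-module. Then fdd(Γ) ≥ fdd(Λ). -/

import Mathlib

/-!
Restriction along `Γ ⊆ Λ` sends flat injective `Λ`-modules to flat injective `Γ`-modules.
An injective `Λ`-module `Q` is `Γ`-injective by Baer's criterion: a `Γ`-linear `g : I → Q` on a
left ideal extends through the `Λ`-span of its graph in `Λ × Q`, whose projection to `Λ` is
injective because `Λ` is right `Γ`-flat. A flat `Λ`-module `F` is `Γ`-flat because, for a finitely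
generated right ideal `J` of `Γ`, left flatness of `Λ` identifies `J ⊗_Γ Λ` with `JΛ`, so
`J ⊗_Γ F ≅ JΛ ⊗_Λ F`, which embeds in `F`. Hence a coresolution of `Λ` by flat injective
`Λ`-modules is one of `Λ` over `Γ`.

It remains to pass from `Λ` to its `Γ`-direct summand `Γ`. If `N = M ⊕ K` embeds in `I`, the
cokernel of `M → I` is an extension of the cokernel of `N → I` by `K`, so induction on the length
reduces this to the horseshoe lemma, flat injective modules being closed under products.
-/

universe u
open MulOpposite
/-- The subgroup of "balanced relations" in `M ⊗[ℤ] X`, for `M` a right `R`-module and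
`X` a left `R`-module.  The quotient of `M ⊗[ℤ] X` by this subgroup is the tensor product
`M ⊗_R X` over the (possibly noncommutative) ring `R`. -/
def balRel (R : Type u) [Ring R] (M : Type u) [AddCommGroup M] [Module Rᵐᵒᵖ M]
    (X : Type u) [AddCommGroup X] [Module R X] : Submodule ℤ (TensorProduct ℤ M X) :=
  Submodule.span ℤ
    {z | ∃ (m : M) (r : R) (x : X), z = m ⊗ₜ[ℤ] (r • x) - ((op r) • m) ⊗ₜ[ℤ] x}

/-- Scalar multiplication `I ⊗[ℤ] F → F`, `i ⊗ v ↦ i • v`, for a right ideal `I` of `R`. -/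
noncomputable def idealSmul (R : Type u) [Ring R] (F : Type u) [AddCommGroup F] [Module R F]
    (I : Submodule Rᵐᵒᵖ R) : TensorProduct ℤ (↥I) F →ₗ[ℤ] F :=
  TensorProduct.lift (AddMonoidHom.toIntLinearMap
    { toFun := fun i => AddMonoidHom.toIntLinearMap
        { toFun := fun v => (i : R) • v
          map_zero' := smul_zero _
          map_add' := fun v w => smul_add _ _ _ }
      map_zero' := by ext v; simp
      map_add' := fun i j => by ext v; simp [add_smul] })

/-- A left module `F` over a (possibly noncommutative) ring `R` is flat if for every
finitely generated right ideal `I` of `R` the canonical map `I ⊗_R F → F` is injective.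
Since `I ⊗_R F` is the quotient of `I ⊗[ℤ] F` by the balanced relations (all of which are
killed by `idealSmul`), this injectivity says exactly that the kernel of `idealSmul`
is contained in the subgroup of balanced relations. -/
def ModFlat (R : Type u) [Ring R] (F : Type u) [AddCommGroup F] [Module R F] : Prop :=
  ∀ I : Submodule Rᵐᵒᵖ R, I.FG →
    LinearMap.ker (idealSmul R F I) ≤ balRel R (↥I) F

/-- `fddGE R n M` holds iff there is an exact sequence
`0 → M → I^0 → ⋯ → I^(n-1)` of left `R`-modules in which every `I^j` is both
flat and injective; i.e. the (left) flat-dominant dimension of `M` is at least `n`. -/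
def fddGE (R : Type u) [Ring R] :
    ℕ → (M : Type u) → [AddCommGroup M] → [Module R M] → Prop
  | 0, _, _, _ => True
  | (n+1), M, iM, mM =>
      letI := iM; letI := mM
      ∃ (I : Type u) (_ : AddCommGroup I) (_ : Module R I),
        ModFlat R I ∧ Module.Injective R I ∧
        ∃ f : M →ₗ[R] I, Function.Injective f ∧ fddGE R n (I ⧸ LinearMap.range f)
section SubringExtension

variable {Λ : Type u} [Ring Λ] (Γ : Subring Λ)

/-- `Λ` as a right `Γ`-module, i.e. as a left module over `Γᵐᵒᵖ`, for a subring `Γ ⊆ Λ`. -/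
instance subringOpModule : Module (↥Γ)ᵐᵒᵖ Λ where
  smul g x := x * (g.unop : Λ)
  one_smul x := mul_one x
  mul_smul g g' x := (mul_assoc x _ _).symm
  smul_zero g := zero_mul _
  smul_add g x y := add_mul x y _
  add_smul g g' x := by
    show x * ((unop (g + g') : ↥Γ) : Λ) = x * ((unop g : ↥Γ) : Λ) + x * ((unop g' : ↥Γ) : Λ)
    rw [unop_add, Subring.coe_add, mul_add]
  zero_smul x := by
    show x * ((unop (0 : (↥Γ)ᵐᵒᵖ) : ↥Γ) : Λ) = 0
    rw [unop_zero, ZeroMemClass.coe_zero, mul_zero]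

/-- The extension `Γ ⊆ Λ` is left-split if the inclusion is a split monomorphism of left
`Γ`-modules. -/
def IsLeftSplitExtension : Prop :=
  ∃ π : Λ →ₗ[↥Γ] ↥Γ, ∀ g : ↥Γ, π (g : Λ) = g

end SubringExtension

open TensorProduct

section Biadditive
variable {A B C : Type*} [AddCommGroup A] [AddCommGroup B] [AddCommGroup C]

noncomputable def liftBiadditive (f : A → B → C) (hA : ∀ a a' b, f (a + a') b = f a b + f a' b)
    (hB : ∀ a b b', f a (b + b') = f a b + f a b') : A ⊗[ℤ] B →ₗ[ℤ] C :=
  TensorProduct.lift (AddMonoidHom.toIntLinearMap (AddMonoidHom.mk'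
    (fun a => AddMonoidHom.toIntLinearMap (AddMonoidHom.mk' (f a) (hB a)))
    (fun a a' => by ext b; exact hA a a' b)))

@[simp] lemma liftBiadditive_tmul (f : A → B → C) (hA) (hB) (a : A) (b : B) :
    liftBiadditive f hA hB (a ⊗ₜ b) = f a b := rfl

end Biadditive

section BalancedTensor
variable {R : Type u} [Ring R] {M X Y : Type u} [AddCommGroup M] [Module Rᵐᵒᵖ M]
  [AddCommGroup X] [Module R X] [AddCommGroup Y] [Module R Y]

lemma balRel_le_ker {N : Type*} [AddCommGroup N] (φ : M ⊗[ℤ] X →ₗ[ℤ] N)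
    (h : ∀ m (r : R) x, φ (m ⊗ₜ (r • x)) = φ ((op r • m) ⊗ₜ x)) :
    balRel R M X ≤ LinearMap.ker φ :=
  Submodule.span_le.2 fun _ ⟨m, r, x, hz⟩ => by simp [hz, h]

lemma balRel_le_comap_lTensor (g : X →ₗ[R] Y) :
    balRel R M X ≤ (balRel R M Y).comap ((g.restrictScalars ℤ).lTensor M) :=
  Submodule.span_le.2 fun _ ⟨m, r, x, hz⟩ => Submodule.subset_span ⟨m, r, g x, by simp [hz]⟩

@[simp] lemma idealSmul_tmul {I : Submodule Rᵐᵒᵖ R} (i : I) (x : X) :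
    idealSmul R X I (i ⊗ₜ x) = (i : R) • x := rfl

lemma idealSmul_lTensor {I : Submodule Rᵐᵒᵖ R} (g : X →ₗ[R] Y) (z : I ⊗[ℤ] X) :
    idealSmul R Y I ((g.restrictScalars ℤ).lTensor I z) = g (idealSmul R X I z) := by
  induction z using TensorProduct.induction_on with
  | zero => simp
  | tmul i x => simp
  | add z z' hz hz' => simp only [map_add, hz, hz']

end BalancedTensor

section Products
variable {R : Type u} [Ring R] {F₁ F₂ : Type u} [AddCommGroup F₁] [AddCommGroup F₂]
  [Module R F₁] [Module R F₂]

lemma Module.Injective.prod (h₁ : Module.Injective R F₁) (h₂ : Module.Injective R F₂) :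
    Module.Injective R (F₁ × F₂) where
  out _ _ _ _ _ _ f hf g := by
    obtain ⟨e₁, he₁⟩ := h₁.out f hf (LinearMap.fst R F₁ F₂ ∘ₗ g)
    obtain ⟨e₂, he₂⟩ := h₂.out f hf (LinearMap.snd R F₁ F₂ ∘ₗ g)
    exact ⟨e₁.prod e₂, fun x => Prod.ext (he₁ x) (he₂ x)⟩

lemma ModFlat.prod (h₁ : ModFlat R F₁) (h₂ : ModFlat R F₂) : ModFlat R (F₁ × F₂) := by
  intro I hI z hz
  have hz₁ := h₁ I hI (show _ = _ by
    rw [idealSmul_lTensor (LinearMap.fst R F₁ F₂), LinearMap.mem_ker.1 hz, map_zero])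
  have hz₂ := h₂ I hI (show _ = _ by
    rw [idealSmul_lTensor (LinearMap.snd R F₁ F₂), LinearMap.mem_ker.1 hz, map_zero])
  have hsplit : z = ((LinearMap.inl R F₁ F₂).restrictScalars ℤ).lTensor I
      (((LinearMap.fst R F₁ F₂).restrictScalars ℤ).lTensor I z) +
      ((LinearMap.inr R F₁ F₂).restrictScalars ℤ).lTensor I
      (((LinearMap.snd R F₁ F₂).restrictScalars ℤ).lTensor I z) := by
    rw [← LinearMap.lTensor_comp_apply, ← LinearMap.lTensor_comp_apply, ← LinearMap.add_apply,
      ← LinearMap.lTensor_add]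
    have hid :
        (LinearMap.inl R F₁ F₂).restrictScalars ℤ ∘ₗ (LinearMap.fst R F₁ F₂).restrictScalars ℤ +
          (LinearMap.inr R F₁ F₂).restrictScalars ℤ ∘ₗ (LinearMap.snd R F₁ F₂).restrictScalars ℤ =
        LinearMap.id := by
      ext <;> simp
    rw [hid, LinearMap.lTensor_id, LinearMap.id_apply]
  rw [hsplit]
  exact add_mem (balRel_le_comap_lTensor _ hz₁) (balRel_le_comap_lTensor _ hz₂)

end Products

section FlatDominant
variable {R : Type u} [Ring R]

lemma fddGE_of_linearEquiv {n : ℕ} {M N : Type u} [AddCommGroup M] [AddCommGroup N]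
    [Module R M] [Module R N] (e : M ≃ₗ[R] N) (h : fddGE R n M) : fddGE R n N := by
  cases n with
  | zero => trivial
  | succ n =>
    obtain ⟨I, _, _, hflat, hinj, f, hf, hq⟩ := h
    refine ⟨I, _, _, hflat, hinj, f ∘ₗ e.symm.toLinearMap, hf.comp e.symm.injective, ?_⟩
    rwa [LinearMap.range_comp, LinearEquiv.range, Submodule.map_top]

lemma fddGE_of_succ {n : ℕ} {M : Type u} [AddCommGroup M] [Module R M]
    (h : fddGE R (n + 1) M) : fddGE R n M := by
  induction n generalizing M with
  | zero => trivial
  | succ n ih =>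
    obtain ⟨I, _, _, hflat, hinj, f, hf, hq⟩ := h
    exact ⟨I, _, _, hflat, hinj, f, hf, ih hq⟩

end FlatDominant

section Quotient
variable {R : Type u} [Ring R]

lemma Submodule.mapQ_surjective {M N : Type u} [AddCommGroup M] [AddCommGroup N] [Module R M]
    [Module R N] {p : Submodule R M} {q : Submodule R N} {f : M →ₗ[R] N}
    (hf : Function.Surjective f) (h : p ≤ q.comap f) : Function.Surjective (p.mapQ q f h) := by
  rw [← LinearMap.range_eq_top, Submodule.range_mapQ, LinearMap.range_eq_top.2 hf,
    Submodule.map_top, Submodule.range_mkQ]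

end Quotient

section Horseshoe
variable {R : Type u} [Ring R] {A B C I₁ I₂ : Type u} [AddCommGroup A] [AddCommGroup B]
  [AddCommGroup C] [AddCommGroup I₁] [AddCommGroup I₂] [Module R A] [Module R B] [Module R C]
  [Module R I₁] [Module R I₂] {i : A →ₗ[R] B} {p : B →ₗ[R] C} {fA : A →ₗ[R] I₁} {fC : C →ₗ[R] I₂}
  {g : B →ₗ[R] I₁}

lemma injective_prod_comp_of_exact (hex : Function.Exact i p) (hfA : Function.Injective fA)
    (hfC : Function.Injective fC) (hg : g ∘ₗ i = fA) :
    Function.Injective (g.prod (fC ∘ₗ p)) := by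
  rw [← LinearMap.ker_eq_bot, LinearMap.ker_eq_bot']
  intro b hb
  have hpb : p b = 0 := hfC (by simpa using congrArg Prod.snd hb)
  obtain ⟨a, rfl⟩ := (hex b).1 hpb
  have hfa : fA a = 0 := by rw [← hg]; simpa using congrArg Prod.fst hb
  rw [hfA (hfa.trans fA.map_zero.symm), map_zero]

lemma range_le_comap_inl (hex : Function.Exact i p) (hg : g ∘ₗ i = fA) :
    LinearMap.range fA ≤ (LinearMap.range (g.prod (fC ∘ₗ p))).comap (LinearMap.inl R I₁ I₂) := by
  rintro _ ⟨a, rfl⟩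
  exact ⟨i a, by simp [← hg, hex.apply_apply_eq_zero]⟩

lemma range_le_comap_snd :
    LinearMap.range (g.prod (fC ∘ₗ p)) ≤ (LinearMap.range fC).comap (LinearMap.snd R I₁ I₂) := by
  rintro _ ⟨b, rfl⟩
  exact ⟨p b, rfl⟩

lemma injective_mapQ_inl (hex : Function.Exact i p) (hfC : Function.Injective fC)
    (hg : g ∘ₗ i = fA) :
    Function.Injective (Submodule.mapQ (LinearMap.range fA) (LinearMap.range (g.prod (fC ∘ₗ p)))
      (LinearMap.inl R I₁ I₂) (range_le_comap_inl hex hg)) := by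
  rw [← LinearMap.ker_eq_bot, LinearMap.ker_eq_bot']
  intro x hx
  obtain ⟨x, rfl⟩ := Submodule.Quotient.mk_surjective _ x
  obtain ⟨b, hb⟩ := (Submodule.Quotient.mk_eq_zero _).1 hx
  have hpb : p b = 0 := hfC (by simpa using congrArg Prod.snd hb)
  obtain ⟨a, rfl⟩ := (hex b).1 hpb
  refine (Submodule.Quotient.mk_eq_zero _).2 ⟨a, ?_⟩
  rw [← hg]
  simpa using congrArg Prod.fst hb

lemma exact_mapQ_inl_mapQ_snd (hex : Function.Exact i p) (hp : Function.Surjective p)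
    (hg : g ∘ₗ i = fA) :
    Function.Exact (Submodule.mapQ (LinearMap.range fA) (LinearMap.range (g.prod (fC ∘ₗ p)))
      (LinearMap.inl R I₁ I₂) (range_le_comap_inl hex hg))
      (Submodule.mapQ (LinearMap.range (g.prod (fC ∘ₗ p))) (LinearMap.range fC)
        (LinearMap.snd R I₁ I₂) range_le_comap_snd) := by
  intro y
  constructor
  · obtain ⟨⟨x, z⟩, rfl⟩ := Submodule.Quotient.mk_surjective _ y
    intro hy
    obtain ⟨c, hc⟩ := (Submodule.Quotient.mk_eq_zero _).1 hy
    obtain ⟨b, rfl⟩ := hp c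
    refine ⟨Submodule.Quotient.mk (x - g b), (Submodule.Quotient.eq _).2 ⟨-b, ?_⟩⟩
    simp only [LinearMap.snd_apply] at hc
    simp [hc]
  · rintro ⟨y, rfl⟩
    obtain ⟨x, rfl⟩ := Submodule.Quotient.mk_surjective _ y
    simp

lemma fddGE_of_exact {n : ℕ} {A B C : Type u} [AddCommGroup A] [AddCommGroup B] [AddCommGroup C]
    [Module R A] [Module R B] [Module R C] {i : A →ₗ[R] B} {p : B →ₗ[R] C}
    (hi : Function.Injective i) (hp : Function.Surjective p) (hex : Function.Exact i p)
    (hA : fddGE R n A) (hC : fddGE R n C) : fddGE R n B := by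
  induction n generalizing A B C with
  | zero => trivial
  | succ n ih =>
    obtain ⟨I₁, _, _, hflat₁, hinj₁, fA, hfA, hqA⟩ := hA
    obtain ⟨I₂, _, _, hflat₂, hinj₂, fC, hfC, hqC⟩ := hC
    obtain ⟨g, hg⟩ := hinj₁.out i hi fA
    replace hg : g ∘ₗ i = fA := LinearMap.ext hg
    exact ⟨I₁ × I₂, _, _, hflat₁.prod hflat₂, hinj₁.prod hinj₂, g.prod (fC ∘ₗ p),
      injective_prod_comp_of_exact hex hfA hfC hg,
      ih (injective_mapQ_inl hex hfC hg) (Submodule.mapQ_surjective LinearMap.snd_surjective _)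
        (exact_mapQ_inl_mapQ_snd hex hp hg) hqA hqC⟩

end Horseshoe

section Retract
variable {R : Type u} [Ring R] {M N I : Type u} [AddCommGroup M] [AddCommGroup N] [AddCommGroup I]
  [Module R M] [Module R N] [Module R I] {ι : M →ₗ[R] N} {r : N →ₗ[R] M} {f : N →ₗ[R] I}

lemma injective_mkQ_comp_ker_subtype (hr : ∀ m, r (ι m) = m) (hf : Function.Injective f) :
    Function.Injective
      ((LinearMap.range (f ∘ₗ ι)).mkQ ∘ₗ f ∘ₗ (LinearMap.ker r).subtype) := by
  rw [← LinearMap.ker_eq_bot, LinearMap.ker_eq_bot']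
  rintro ⟨k, hk⟩ hk0
  obtain ⟨m, hm⟩ := (Submodule.Quotient.mk_eq_zero _).1 hk0
  obtain rfl : ι m = k := hf hm
  rw [LinearMap.mem_ker, hr] at hk
  simp [hk]

lemma exact_mkQ_comp_ker_subtype_factor (hr : ∀ m, r (ι m) = m) :
    Function.Exact ((LinearMap.range (f ∘ₗ ι)).mkQ ∘ₗ f ∘ₗ (LinearMap.ker r).subtype)
      (Submodule.factor (LinearMap.range_comp_le_range ι f)) := by
  intro y
  constructor
  · obtain ⟨x, rfl⟩ := Submodule.Quotient.mk_surjective _ y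
    intro hx
    obtain ⟨n, rfl⟩ := (Submodule.Quotient.mk_eq_zero _).1 hx
    refine ⟨⟨n - ι (r n), by simp [hr]⟩, (Submodule.Quotient.eq _).2 ⟨-r n, ?_⟩⟩
    simp
  · rintro ⟨k, rfl⟩
    exact (Submodule.Quotient.mk_eq_zero _).2 ⟨k, rfl⟩

lemma fddGE_of_retraction {n : ℕ} (ι : M →ₗ[R] N) (r : N →ₗ[R] M) (hr : ∀ m, r (ι m) = m)
    (hN : fddGE R n N) : fddGE R n M := by
  induction n generalizing M N with
  | zero => trivial
  | succ n ih =>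
    have hker : fddGE R n (LinearMap.ker r) :=
      ih (LinearMap.ker r).subtype
        (LinearMap.codRestrict _ (LinearMap.id - ι ∘ₗ r) fun x => by simp [hr])
        (fun ⟨k, hk⟩ => by ext; simp [LinearMap.mem_ker.1 hk]) (fddGE_of_succ hN)
    obtain ⟨I, _, _, hflat, hinj, f, hf, hq⟩ := hN
    have hι : Function.Injective ι := Function.LeftInverse.injective hr
    exact ⟨I, _, _, hflat, hinj, f ∘ₗ ι, hf.comp hι, fddGE_of_exact
      (injective_mkQ_comp_ker_subtype hr hf) (Submodule.factor_surjective _)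
      (exact_mkQ_comp_ker_subtype_factor hr) hker hq⟩

end Retract

section Restriction
variable {Λ : Type u} [Ring Λ] {Γ : Subring Λ}

@[simp] lemma op_smul_eq_mul_coe (γ : Γ) (x : Λ) : op γ • x = x * γ := rfl

lemma sum_smul_eq_zero_of_sum_mul_eq_zero (hflat : ModFlat Γᵐᵒᵖ Λ) {Q : Type u}
    [AddCommGroup Q] [Module Λ Q] {I : Submodule Γ Γ} (g : I →ₗ[Γ] Q) {ι : Type u} [Fintype ι]
    (c : ι → Λ) (j : ι → I) (h : ∑ a, c a * (j a : Λ) = 0) : ∑ a, c a • g (j a) = 0 := by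
  -- the left ideal of `Γ` spanned by the `j a`, as a right ideal of `Γᵐᵒᵖ`
  let J : Submodule Γᵐᵒᵖᵐᵒᵖ Γᵐᵒᵖ := Submodule.span _ (Set.range fun a => op (j a : Γ))
  have hJ : ∀ m ∈ J, m.unop ∈ I := by
    intro m hm
    induction hm using Submodule.span_induction with
    | mem m hm => obtain ⟨a, rfl⟩ := hm; exact (j a).2
    | zero => exact I.zero_mem
    | add m m' _ _ hm hm' => exact I.add_mem hm hm'
    | smul c m _ hm => exact I.smul_mem c.unop.unop hm
  let φ : J ⊗[ℤ] Λ →ₗ[ℤ] Q :=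
    liftBiadditive (fun m x => x • g ⟨m.1.unop, hJ _ m.2⟩)
      (fun m m' x => by simp only [← smul_add, ← map_add]; rfl) (fun _ _ _ => add_smul ..)
  have hφ : balRel Γᵐᵒᵖ J Λ ≤ LinearMap.ker φ := by
    refine balRel_le_ker φ fun m r x => ?_
    simp only [φ, liftBiadditive_tmul]
    have e : (⟨(op r • m).1.unop, hJ _ (op r • m).2⟩ : I) = r.unop • ⟨m.1.unop, hJ _ m.2⟩ := rfl
    rw [e, map_smul, Subring.smul_def, smul_smul]
    rfl
  let z : J ⊗[ℤ] Λ := ∑ a, ⟨op (j a : Γ), Submodule.subset_span ⟨a, rfl⟩⟩ ⊗ₜ c a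
  have hz : z ∈ balRel Γᵐᵒᵖ J Λ := hflat J (Submodule.fg_span (Set.finite_range _)) (by
    simpa [z] using h)
  simpa [z, φ] using hφ hz

lemma Module.Injective.of_subring {Q : Type u} [AddCommGroup Q] [Module Λ Q]
    (hQ : Module.Injective Λ Q) (hflat : ModFlat Γᵐᵒᵖ Λ) : Module.Injective Γ Q := by
  refine Module.Baer.injective fun I g => ?_
  let T := Submodule.span Λ (Set.range fun i : I => (((i : Γ) : Λ), g i))
  have hT : ∀ w ∈ T, w.1 = 0 → w.2 = 0 := by
    intro w hw hw1
    obtain ⟨c, rfl⟩ := Finsupp.mem_span_range_iff_exists_finsupp.1 hw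
    simp only [Finsupp.sum, Prod.fst_sum, Prod.snd_sum, Prod.smul_fst, Prod.smul_snd, smul_eq_mul,
      ← Finset.sum_coe_sort c.support] at hw1 ⊢
    exact sum_smul_eq_zero_of_sum_mul_eq_zero hflat g (fun a : c.support => c a) (fun a => a) hw1
  obtain ⟨h, hh⟩ := hQ.out (LinearMap.fst Λ Λ Q ∘ₗ T.subtype)
    (by
      rw [← LinearMap.ker_eq_bot, LinearMap.ker_eq_bot']
      exact fun w hw => Subtype.ext (Prod.ext hw (hT w w.2 hw)))
    (LinearMap.snd Λ Λ Q ∘ₗ T.subtype)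
  refine ⟨h.restrictScalars Γ ∘ₗ LinearMap.toSpanSingleton Γ Λ 1, fun x hx => ?_⟩
  simpa [Subring.smul_def] using hh ⟨_, Submodule.subset_span ⟨⟨x, hx⟩, rfl⟩⟩

section FlatRestriction

def extendRightIdeal (J : Submodule Γᵐᵒᵖ Γ) : Submodule Λᵐᵒᵖ Λ :=
  Submodule.span Λᵐᵒᵖ (Subtype.val '' (J : Set Γ))

lemma coe_mem_extendRightIdeal {J : Submodule Γᵐᵒᵖ Γ} {x : Γ} (hx : x ∈ J) :
    (x : Λ) ∈ extendRightIdeal J :=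
  Submodule.subset_span ⟨x, hx, rfl⟩

lemma extendRightIdeal_fg {J : Submodule Γᵐᵒᵖ Γ} (hJ : J.FG) : (extendRightIdeal J).FG := by
  classical
  obtain ⟨S, rfl⟩ := hJ
  refine ⟨S.image Subtype.val, le_antisymm ?_ (Submodule.span_le.2 ?_)⟩
  · rw [Finset.coe_image]
    exact Submodule.span_mono (Set.image_mono Submodule.subset_span)
  · rintro _ ⟨x, hx, rfl⟩
    induction hx using Submodule.span_induction with
    | mem x hx => exact Submodule.subset_span (by simpa using hx)
    | zero => exact zero_mem _
    | add x y _ _ hx hy => exact add_mem hx hy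
    | smul c x _ hx => exact Submodule.smul_mem _ (op (c.unop : Λ)) hx

variable (J : Submodule Γᵐᵒᵖ Γ)

noncomputable def extendRightIdealMul : J ⊗[ℤ] Λ →ₗ[ℤ] extendRightIdeal J :=
  liftBiadditive
    (fun i x => ⟨(i : Λ) * x, Submodule.smul_mem _ (op x) (coe_mem_extendRightIdeal i.2)⟩)
    (fun _ _ _ => Subtype.ext (add_mul _ _ _)) (fun _ _ _ => Subtype.ext (mul_add _ _ _))

lemma coe_extendRightIdealMul (t : J ⊗[ℤ] Λ) :
    (extendRightIdealMul J t : Λ) = idealSmul Γ Λ J t := by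
  induction t using TensorProduct.induction_on with
  | zero => simp
  | tmul i x => rfl
  | add t t' ht ht' => simp only [map_add, Submodule.coe_add, ht, ht']

lemma coe_extendRightIdealMul_lTensor_mulRight (μ : Λ) (t : J ⊗[ℤ] Λ) :
    (extendRightIdealMul J ((LinearMap.mulRight ℤ μ).lTensor J t) : Λ) =
      extendRightIdealMul J t * μ := by
  induction t using TensorProduct.induction_on with
  | zero => simp
  | tmul i x => exact (mul_assoc _ _ _).symm
  | add t t' ht ht' => simp only [map_add, Submodule.coe_add, ht, ht', add_mul]

lemma extendRightIdealMul_surjective : Function.Surjective (extendRightIdealMul J) := by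
  suffices h : ∀ x ∈ extendRightIdeal J, ∃ t, (extendRightIdealMul J t : Λ) = x from
    fun x => (h x x.2).imp fun _ => Subtype.ext
  intro x hx
  induction hx using Submodule.span_induction with
  | mem x hx =>
    obtain ⟨i, hi, rfl⟩ := hx
    exact ⟨⟨i, hi⟩ ⊗ₜ 1, mul_one _⟩
  | zero => exact ⟨0, by simp⟩
  | add x y _ _ hx hy =>
    obtain ⟨⟨t, rfl⟩, ⟨t', rfl⟩⟩ := And.intro hx hy
    exact ⟨t + t', by simp⟩
  | smul c x _ hx =>
    obtain ⟨t, rfl⟩ := hx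
    exact ⟨(LinearMap.mulRight ℤ c.unop).lTensor J t,
      coe_extendRightIdealMul_lTensor_mulRight J _ t⟩

variable (F : Type u) [AddCommGroup F] [Module Λ F]

noncomputable def balancedPairing : J ⊗[ℤ] Λ →ₗ[ℤ] F →ₗ[ℤ] (J ⊗[ℤ] F ⧸ balRel Γ J F) :=
  liftBiadditive
    (fun i x => (AddMonoidHom.mk' (fun v => Submodule.Quotient.mk (i ⊗ₜ (x • v)))
      fun _ _ => by simp only [smul_add, tmul_add, Submodule.Quotient.mk_add]).toIntLinearMap)
    (fun _ _ _ => by ext; simp [add_tmul]) (fun _ _ _ => by ext; simp [add_smul, tmul_add])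

@[simp] lemma balancedPairing_tmul (i : J) (x : Λ) (v : F) :
    balancedPairing J F (i ⊗ₜ x) v = Submodule.Quotient.mk (i ⊗ₜ (x • v)) := rfl

lemma balancedPairing_lTensor_mulRight (μ : Λ) (t : J ⊗[ℤ] Λ) (v : F) :
    balancedPairing J F ((LinearMap.mulRight ℤ μ).lTensor J t) v =
      balancedPairing J F t (μ • v) := by
  induction t using TensorProduct.induction_on with
  | zero => simp
  | tmul i x => simp [mul_smul]
  | add t t' ht ht' => simp only [map_add, LinearMap.add_apply, ht, ht']

variable {J} (hleftflat : ModFlat Γ Λ) (hJ : J.FG)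
include hleftflat hJ

lemma ker_extendRightIdealMul_le :
    LinearMap.ker (extendRightIdealMul J) ≤ LinearMap.ker (balancedPairing J F) := by
  intro t ht
  refine balRel_le_ker _ (fun i γ x => ?_) (hleftflat J hJ ?_)
  · ext v
    refine (Submodule.Quotient.eq _).2 (Submodule.subset_span ⟨i, γ, x • v, ?_⟩)
    simp [Subring.smul_def, mul_smul]
  · rw [LinearMap.mem_ker, ← coe_extendRightIdealMul, LinearMap.mem_ker.1 ht, Submodule.coe_zero]

/-- `jλ ⊗ v ↦ [j ⊗ λv]`, well defined because left flatness of `Λ` makes `J ⊗_Γ Λ → JΛ`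
injective. -/
noncomputable def descendedPairing :
    extendRightIdeal J ⊗[ℤ] F →ₗ[ℤ] (J ⊗[ℤ] F ⧸ balRel Γ J F) :=
  TensorProduct.lift ((LinearMap.ker (extendRightIdealMul J)).liftQ (balancedPairing J F)
      (ker_extendRightIdealMul_le F hleftflat hJ) ∘ₗ
    ((extendRightIdealMul J).quotKerEquivOfSurjective
      (extendRightIdealMul_surjective J)).symm.toLinearMap)

lemma descendedPairing_tmul (t : J ⊗[ℤ] Λ) (v : F) :
    descendedPairing F hleftflat hJ (extendRightIdealMul J t ⊗ₜ v) = balancedPairing J F t v := by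
  change (LinearMap.ker (extendRightIdealMul J)).liftQ (balancedPairing J F)
    (ker_extendRightIdealMul_le F hleftflat hJ)
    (((extendRightIdealMul J).quotKerEquivOfSurjective (extendRightIdealMul_surjective J)).symm
      (extendRightIdealMul J t)) v = _
  rw [LinearMap.quotKerEquivOfSurjective_symm_apply]
  rfl

lemma balRel_le_ker_descendedPairing :
    balRel Λ (extendRightIdeal J) F ≤ LinearMap.ker (descendedPairing F hleftflat hJ) := by
  refine balRel_le_ker _ fun x μ v => ?_
  obtain ⟨t, rfl⟩ := extendRightIdealMul_surjective J x
  have hμ : op μ • extendRightIdealMul J t =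
      extendRightIdealMul J ((LinearMap.mulRight ℤ μ).lTensor J t) :=
    Subtype.ext (coe_extendRightIdealMul_lTensor_mulRight J μ t).symm
  rw [hμ, descendedPairing_tmul, descendedPairing_tmul, balancedPairing_lTensor_mulRight]

end FlatRestriction

theorem ModFlat.of_subring {F : Type u} [AddCommGroup F] [Module Λ F] (hF : ModFlat Λ F)
    (hleftflat : ModFlat Γ Λ) : ModFlat Γ F := by
  intro J hJ z hz
  let incl : J →ₗ[ℤ] extendRightIdeal J :=
    extendRightIdealMul J ∘ₗ (TensorProduct.mk ℤ J Λ).flip 1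
  have hsmul : ∀ w, idealSmul Λ F _ (incl.rTensor F w) = idealSmul Γ F J w := by
    intro w
    induction w using TensorProduct.induction_on with
    | zero => simp
    | tmul i v => exact congrArg (· • v) (mul_one (i : Λ))
    | add w w' hw hw' => simp only [map_add, hw, hw']
  have hpair : ∀ w, descendedPairing F hleftflat hJ (incl.rTensor F w) =
      Submodule.Quotient.mk w := by
    intro w
    induction w using TensorProduct.induction_on with
    | zero => simp
    | tmul i v =>
      rw [LinearMap.rTensor_tmul]
      exact (descendedPairing_tmul F hleftflat hJ (i ⊗ₜ 1) v).trans (by simp)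
    | add w w' hw hw' => simp only [map_add, hw, hw', Submodule.Quotient.mk_add]
  have hbal := hF _ (extendRightIdeal_fg hJ)
    (show incl.rTensor F z ∈ LinearMap.ker _ by
      rw [LinearMap.mem_ker, hsmul, LinearMap.mem_ker.1 hz])
  rw [← Submodule.Quotient.mk_eq_zero, ← hpair]
  exact balRel_le_ker_descendedPairing F hleftflat hJ hbal

theorem fddGE_subring (hleftflat : ModFlat Γ Λ) (hrightflat : ModFlat Γᵐᵒᵖ Λ) {n : ℕ}
    {M : Type u} [AddCommGroup M] [Module Λ M] (h : fddGE Λ n M) : fddGE Γ n M := by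
  induction n generalizing M with
  | zero => trivial
  | succ n ih =>
    obtain ⟨I, _, _, hflat, hinj, f, hf, hq⟩ := h
    refine ⟨I, _, _, hflat.of_subring hleftflat, hinj.of_subring hrightflat,
      f.restrictScalars Γ, hf, ?_⟩
    rw [LinearMap.range_restrictScalars]
    exact fddGE_of_linearEquiv (Submodule.Quotient.restrictScalarsEquiv Γ _).symm (ih hq)

end Restriction

theorem stmt11 (Λ : Type u) [Ring Λ] (Γ : Subring Λ)
    (hsplit : IsLeftSplitExtension Γ)
    (hleftflat : ModFlat ↥Γ Λ)
    (hrightflat : ModFlat (↥Γ)ᵐᵒᵖ Λ) :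
    ∀ n : ℕ, fddGE Λ n Λ → fddGE ↥Γ n ↥Γ := by
  intro n h
  obtain ⟨π, hπ⟩ := hsplit
  refine fddGE_of_retraction (LinearMap.toSpanSingleton Γ Λ 1) π (fun g => ?_)
    (fddGE_subring hleftflat hrightflat h)
  simpa only [LinearMap.toSpanSingleton_apply, Subring.smul_def, smul_eq_mul, mul_one] using hπ g
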